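/- Let X be a simplicial complex of dimension n and 1 ≤ k ≤ n-1. Suppose (i) every two (k-1)-simplices of X are connected by a k-gallery, and (ii) for every (k-1)-simplex τ, the link X_τ is path connected. Then every two k-simplices of X are connected by a (k+1)-gallery; i.e., X is (k+1)-gallery connected. -/

import Mathlib

variable {V : Type*} [DecidableEq V]

/-- The set of `j`-dimensional simplices of a simplicial complex `K`. -/
def faces (K : Finset (Finset V)) (j : ℕ) : Finset (Finset V) :=
  K.filter fun σ => σ.card = j + 1

/-- `K` is closed under passing to (nonempty) faces. -/
def IsDownClosed (K : Finset (Finset V)) : Prop :=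
  ∀ σ ∈ K, ∀ τ : Finset V, τ ⊆ σ → τ.Nonempty → τ ∈ K

/-- `η₀` and `η₁` (`j`-simplices, of cardinality `j+1`) are connected by a `(j+1)`-gallery with
simplices in `F`: consecutive simplices of the gallery share a `j`-face. -/
def GalleryConnects (j : ℕ) (F : Finset (Finset V)) (η₀ η₁ : Finset V) : Prop :=
  η₀ = η₁ ∨ ∃ (L : List (Finset V)) (h : L ≠ []),
    (∀ σ ∈ L, σ ∈ F) ∧ L.Chain' (fun a b => (a ∩ b).card = j + 1) ∧
    η₀ ⊆ L.head h ∧ η₁ ⊆ L.getLast h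

/-- `a` and `b` are adjacent vertices of the link `X_τ`. -/
def LinkAdj (K : Finset (Finset V)) (τ : Finset V) (a b : V) : Prop :=
  a ∉ τ ∧ b ∉ τ ∧ a ≠ b ∧ insert a (insert b τ) ∈ K

/-- The link `X_τ` is path connected. -/
def LinkConnected (K : Finset (Finset V)) (τ : Finset V) : Prop :=
  ∀ u v : V, u ∉ τ → insert u τ ∈ K → v ∉ τ → insert v τ ∈ K →
    Relation.ReflTransGen (LinkAdj K τ) u v

/-!
Call two `k`-simplices adjacent when they lie in a common `(k+1)`-simplex; a path for this
relation between `k`-simplices yields a `(k+1)`-gallery, since two distinct `(k+1)`-simplices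
containing the same `k`-simplex meet exactly in it. An edge `ab` in the link of a `(k-1)`-simplex
`τ` makes `τ ∪ {a}` and `τ ∪ {b}` adjacent, so connectivity of the link connects any two
`k`-simplices through `τ`. Finally, a `k`-gallery between `(k-1)`-faces `τ₀ ⊆ η₀` and `τ₁ ⊆ η₁`
is a sequence of `k`-simplices in which consecutive ones share a `(k-1)`-face, so chaining
through the links of these shared faces connects `η₀` to `η₁`.
-/

open Relation

def CofaceAdj (K : Finset (Finset V)) (j : ℕ) (σ σ' : Finset V) : Prop :=
  σ.card = j + 1 ∧ σ'.card = j + 1 ∧ ∃ b ∈ faces K (j + 1), σ ⊆ b ∧ σ' ⊆ b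

lemma card_inter_eq_of_ne {j : ℕ} {σ b b' : Finset V} (hb : b.card = j + 2)
    (hb' : b'.card = j + 2) (hne : b ≠ b') (hσ : σ.card = j + 1) (hσb : σ ⊆ b)
    (hσb' : σ ⊆ b') : (b ∩ b').card = j + 1 := by
  have hle : j + 1 ≤ (b ∩ b').card := hσ ▸ Finset.card_le_card (Finset.subset_inter hσb hσb')
  have hlt : (b ∩ b').card < b.card := by
    refine Finset.card_lt_card (Finset.inter_subset_left.ssubset_of_ne fun h => hne ?_)
    exact Finset.eq_of_subset_of_card_le (h ▸ Finset.inter_subset_right) (by omega)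
  omega

lemma GalleryConnects.cofaceAdj_cons {K : Finset (Finset V)} {j : ℕ} {η σ η' : Finset V}
    (hadj : CofaceAdj K j η σ) (h : GalleryConnects j (faces K (j + 1)) σ η') :
    GalleryConnects j (faces K (j + 1)) η η' := by
  obtain ⟨-, hσ, b, hb, hηb, hσb⟩ := hadj
  right
  rcases h with rfl | ⟨L, hL, hLF, hchain, hhead, hlast⟩
  · exact ⟨[b], List.cons_ne_nil _ _, by simpa using hb, List.isChain_singleton b, hηb, hσb⟩
  by_cases hbL : b = L.head hL
  · exact ⟨L, hL, hLF, hchain, hbL ▸ hηb, hlast⟩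
  refine ⟨b :: L, List.cons_ne_nil _ _, ?_, ?_, hηb, by rwa [List.getLast_cons hL]⟩
  · simpa [hb] using hLF
  · obtain ⟨L₀, L', rfl⟩ := List.exists_cons_of_ne_nil hL
    refine List.isChain_cons_cons.mpr ⟨?_, hchain⟩
    have hL₀ := (Finset.mem_filter.mp (hLF L₀ List.mem_cons_self)).2
    exact card_inter_eq_of_ne (Finset.mem_filter.mp hb).2 hL₀ hbL hσ hσb hhead

lemma GalleryConnects.of_reflTransGen {K : Finset (Finset V)} {j : ℕ} {η η' : Finset V}
    (h : ReflTransGen (CofaceAdj K j) η η') :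
    GalleryConnects j (faces K (j + 1)) η η' := by
  induction h using ReflTransGen.head_induction_on with
  | refl => exact Or.inl rfl
  | head hadj _ ih => exact ih.cofaceAdj_cons hadj

lemma LinkAdj.cofaceAdj {K : Finset (Finset V)} {τ : Finset V} {a b : V}
    (h : LinkAdj K τ a b) : CofaceAdj K τ.card (insert a τ) (insert b τ) := by
  obtain ⟨ha, hb, hab, hK⟩ := h
  refine ⟨Finset.card_insert_of_notMem ha, Finset.card_insert_of_notMem hb,
    insert a (insert b τ), Finset.mem_filter.mpr ⟨hK, ?_⟩, ?_, ?_⟩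
  · rw [Finset.card_insert_of_notMem (by simp [ha, hab]), Finset.card_insert_of_notMem hb]
  · exact Finset.insert_subset_insert a (Finset.subset_insert b τ)
  · exact Finset.insert_subset (by simp)
      ((Finset.subset_insert b τ).trans (Finset.subset_insert a _))

lemma LinkConnected.reflTransGen_cofaceAdj {K : Finset (Finset V)} {j : ℕ} {τ σ σ' : Finset V}
    (hlink : LinkConnected K τ) (hτ : τ.card = j) (hσ : σ ∈ faces K j) (hσ' : σ' ∈ faces K j)
    (hτσ : τ ⊆ σ) (hτσ' : τ ⊆ σ') : ReflTransGen (CofaceAdj K j) σ σ' := by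
  subst hτ
  obtain ⟨hσK, hσc⟩ := Finset.mem_filter.mp hσ
  obtain ⟨hσ'K, hσ'c⟩ := Finset.mem_filter.mp hσ'
  obtain ⟨u, hu, rfl⟩ := Finset.exists_eq_insert_iff.mpr ⟨hτσ, hσc.symm⟩
  obtain ⟨v, hv, rfl⟩ := Finset.exists_eq_insert_iff.mpr ⟨hτσ', hσ'c.symm⟩
  exact (hlink u v hu hσK hv hσ'K).lift (insert · τ) fun _ _ => LinkAdj.cofaceAdj

lemma GalleryConnects.reflTransGen_of_subset {j : ℕ} {F : Finset (Finset V)}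
    {R : Finset V → Finset V → Prop}
    (hR : ∀ τ σ σ', τ.card = j + 1 → σ ∈ F → σ' ∈ F → τ ⊆ σ → τ ⊆ σ' →
      ReflTransGen R σ σ')
    {τ₀ τ₁ η₀ η₁ : Finset V} (h : GalleryConnects j F τ₀ τ₁) (hτ₀ : τ₀.card = j + 1)
    (hτ₁ : τ₁.card = j + 1) (hη₀ : η₀ ∈ F) (hη₁ : η₁ ∈ F) (hτη₀ : τ₀ ⊆ η₀) (hτη₁ : τ₁ ⊆ η₁) :
    ReflTransGen R η₀ η₁ := by
  rcases h with rfl | ⟨L, hL, hLF, hchain, hhead, hlast⟩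
  · exact hR τ₀ η₀ η₁ hτ₀ hη₀ hη₁ hτη₀ hτη₁
  have hsteps : L.IsChain (ReflTransGen R) :=
    hchain.imp_of_mem_imp fun a b ha hb hab =>
      hR (a ∩ b) a b hab (hLF a ha) (hLF b hb) Finset.inter_subset_left Finset.inter_subset_right
  have hmid : ReflTransGen R (L.head hL) (L.getLast hL) := by
    simpa only [reflTransGen_eq_self] using
      List.relationReflTransGen_of_exists_isChain L hsteps hL
  exact (hR τ₀ η₀ _ hτ₀ hη₀ (hLF _ (List.head_mem hL)) hτη₀ hhead).trans <|
    hmid.trans (hR τ₁ _ η₁ hτ₁ (hLF _ (List.getLast_mem hL)) hη₁ hlast hτη₁)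

theorem stmt_11_general (K : Finset (Finset V)) (k : ℕ) (hk : 1 ≤ k) (hdown : IsDownClosed K)
    (hconn : ∀ η₀ ∈ faces K (k - 1), ∀ η₁ ∈ faces K (k - 1),
      GalleryConnects (k - 1) (faces K k) η₀ η₁)
    (hlink : ∀ τ ∈ faces K (k - 1), LinkConnected K τ) :
    ∀ η₀ ∈ faces K k, ∀ η₁ ∈ faces K k, GalleryConnects k (faces K (k + 1)) η₀ η₁ := by
  obtain ⟨j, rfl⟩ : ∃ j, k = j + 1 := ⟨k - 1, by omega⟩
  simp only [Nat.add_sub_cancel] at hconn hlink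
  have hface : ∀ σ ∈ faces K (j + 1), ∀ τ ⊆ σ, τ.card = j + 1 → τ ∈ faces K j :=
    fun σ hσ τ hτσ hτ => Finset.mem_filter.mpr
      ⟨hdown σ (Finset.mem_filter.mp hσ).1 τ hτσ (Finset.card_pos.mp (by omega)), hτ⟩
  have hfacet : ∀ η ∈ faces K (j + 1), ∃ τ ∈ faces K j, τ ⊆ η := fun η hη =>
    have ⟨τ, hτη, hτ⟩ := Finset.exists_subset_card_eq
      (show j + 1 ≤ η.card by rw [(Finset.mem_filter.mp hη).2]; omega)
    ⟨τ, hface η hη τ hτη hτ, hτη⟩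
  have hshared : ∀ τ σ σ', τ.card = j + 1 → σ ∈ faces K (j + 1) → σ' ∈ faces K (j + 1) →
      τ ⊆ σ → τ ⊆ σ' → ReflTransGen (CofaceAdj K (j + 1)) σ σ' :=
    fun τ σ σ' hτ hσ hσ' hτσ hτσ' =>
      (hlink τ (hface σ hσ τ hτσ hτ)).reflTransGen_cofaceAdj hτ hσ hσ' hτσ hτσ'
  intro η₀ hη₀ η₁ hη₁
  obtain ⟨τ₀, hτ₀, hτη₀⟩ := hfacet η₀ hη₀
  obtain ⟨τ₁, hτ₁, hτη₁⟩ := hfacet η₁ hη₁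
  exact .of_reflTransGen <| (hconn τ₀ hτ₀ τ₁ hτ₁).reflTransGen_of_subset hshared
    (Finset.mem_filter.mp hτ₀).2 (Finset.mem_filter.mp hτ₁).2 hη₀ hη₁ hτη₀ hτη₁

/-- If every two `(k-1)`-simplices of `X` are connected by a `k`-gallery and every link of a
`(k-1)`-simplex is path connected, then every two `k`-simplices of `X` are connected by a
`(k+1)`-gallery, i.e. `X` is `(k+1)`-gallery connected. -/
theorem stmt_11 (K : Finset (Finset V)) (n k : ℕ) (hk : 1 ≤ k) (hkn : k + 1 ≤ n)
    (hdim : ∀ σ ∈ K, σ.card ≤ n + 1) (hdown : IsDownClosed K)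
    (hconn : ∀ η₀ ∈ faces K (k - 1), ∀ η₁ ∈ faces K (k - 1),
      GalleryConnects (k - 1) (faces K k) η₀ η₁)
    (hlink : ∀ τ ∈ faces K (k - 1), LinkConnected K τ) :
    ∀ η₀ ∈ faces K k, ∀ η₁ ∈ faces K k, GalleryConnects k (faces K (k + 1)) η₀ η₁ :=
  stmt_11_general K k hk hdown hconn hlink
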